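/- arXiv:2211.01468 — 2 statements merged into one kernel-verified Lean document; each statement's English description precedes it below -/
import Mathlib

section
/- For the lazy random walk on a connected weighted graph, starting from any probability distribution p, the ℓ1 distance to stationarity after t steps satisfies ||X^t p - π||_1 <= e^{-t ν₂ / 2} · n · d_max / d_min, where ν₂ is the second smallest eigenvalue of the normalized Laplacian D^{-1/2} L D^{-1/2}. -/
open Matrix BigOperators

/-- The second smallest eigenvalue of a symmetric matrix, via the
Courant–Fischer min-max characterization: the infimum over 2-dimensional subspaces
of the supremum of the Rayleigh quotient. -/
noncomputable def lambda2 {ι : Type*} [Fintype ι] (M : Matrix ι ι ℝ) : ℝ :=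
  ⨅ U : {U : Submodule ℝ (ι → ℝ) // Module.finrank ℝ U = 2},
    ⨆ x : {x : ι → ℝ // x ∈ U.1 ∧ x ≠ 0},
      (x.1 ⬝ᵥ M.mulVec x.1) / (x.1 ⬝ᵥ x.1)

/-!
Write `d` for the degree vector, `D = diag d`, `N = D^{-1/2} L D^{-1/2}`. Conjugation by `D^{1/2}`
turns the lazy walk into the symmetric matrix `I - N/2`: `X = D^{1/2} (I - N/2) D^{-1/2}`. The
spectrum of `N` lies in `[0, 2]`, `N √d = 0`, and by connectivity the kernel of `N` is spanned by
`√d`. Hence `X^t p - π = D^{1/2} (I - N/2)^t y` with `y = D^{-1/2} (p - π)` orthogonal to `√d`.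
By the min-max definition of `ν₂`, every eigenvector that meets `y` has eigenvalue `μ ≥ ν₂`, so
`(I - N/2)^t` shrinks `y` by `(1 - μ/2)^t ≤ e^{-t ν₂/2}` in `ℓ²`. Finally `‖y‖² ≤ 1/d_min`, and
Cauchy–Schwarz against `√d` turns the `ℓ²` bound into the `ℓ¹` bound with the factor
`√(∑ d / d_min) ≤ ∑ d / d_min ≤ n d_max / d_min`.
-/

section Spectral

variable {ι : Type*} [Fintype ι]

theorem OrthonormalBasis.dotProduct_self_eq_sum_sq
    (b : OrthonormalBasis ι ℝ (EuclideanSpace ℝ ι)) (w : ι → ℝ) :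
    w ⬝ᵥ w = ∑ k, ((b k).ofLp ⬝ᵥ w) ^ 2 := by
  have := b.sum_inner_mul_inner (WithLp.toLp 2 w) (WithLp.toLp 2 w)
  simp only [EuclideanSpace.inner_eq_star_dotProduct, star_trivial] at this
  simp [← this, sq, dotProduct_comm]

theorem OrthonormalBasis.dotProduct_self_apply
    (b : OrthonormalBasis ι ℝ (EuclideanSpace ℝ ι)) (k : ι) : (b k).ofLp ⬝ᵥ (b k).ofLp = 1 := by
  have := real_inner_self_eq_norm_sq (b k)
  rw [b.orthonormal.1 k, EuclideanSpace.inner_eq_star_dotProduct] at this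
  simpa using this

variable [DecidableEq ι]

theorem Matrix.diagonal_mulVec_eq_mul (d v : ι → ℝ) : diagonal d *ᵥ v = d * v :=
  funext (mulVec_diagonal d v)

namespace Matrix.IsHermitian

variable {N : Matrix ι ι ℝ}

theorem eigenvalues_eq_dotProduct_mulVec (hN : N.IsHermitian) (k : ι) :
    hN.eigenvalues k =
      (hN.eigenvectorBasis k).ofLp ⬝ᵥ (N *ᵥ (hN.eigenvectorBasis k).ofLp) := by
  rw [hN.mulVec_eigenvectorBasis, dotProduct_smul, OrthonormalBasis.dotProduct_self_apply,
    smul_eq_mul, mul_one]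

theorem pow_mulVec_eigenvectorBasis (hN : N.IsHermitian) (c : ℝ) (t : ℕ) (k : ι) :
    (1 - c • N) ^ t *ᵥ (hN.eigenvectorBasis k).ofLp =
      (1 - c * hN.eigenvalues k) ^ t • (hN.eigenvectorBasis k).ofLp := by
  have hstep : (1 - c • N) *ᵥ (hN.eigenvectorBasis k).ofLp =
      (1 - c * hN.eigenvalues k) • (hN.eigenvectorBasis k).ofLp := by
    rw [sub_mulVec, one_mulVec, smul_mulVec, hN.mulVec_eigenvectorBasis, smul_smul, sub_smul,
      one_smul]
  induction t with
  | zero => simp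
  | succ t ih => rw [pow_succ, ← mulVec_mulVec, hstep, mulVec_smul, ih, smul_smul, pow_succ']

theorem eigenvectorBasis_dotProduct_pow_mulVec (hN : N.IsHermitian) (c : ℝ) (t : ℕ) (k : ι)
    (y : ι → ℝ) :
    (hN.eigenvectorBasis k).ofLp ⬝ᵥ ((1 - c • N) ^ t *ᵥ y) =
      (1 - c * hN.eigenvalues k) ^ t * ((hN.eigenvectorBasis k).ofLp ⬝ᵥ y) := by
  have hsymm : ((1 - c • N) ^ t).IsSymm :=
    ((isSymm_one.sub ((isHermitian_iff_isSymm.1 hN).smul c))).pow t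
  rw [dotProduct_mulVec, ← hsymm.eq, vecMul_transpose, hN.pow_mulVec_eigenvectorBasis,
    smul_dotProduct, smul_eq_mul]

theorem le_eigenvalues_of_dotProduct_ne_zero (hN : N.IsHermitian) {u : ι → ℝ}
    (hNu : N *ᵥ u = 0) (hker : ∀ x, N *ᵥ x = 0 → ∃ c : ℝ, x = c • u) {ν : ℝ}
    (hν : ∀ x, x ⬝ᵥ u = 0 → ν * (x ⬝ᵥ x) ≤ x ⬝ᵥ (N *ᵥ x)) {y : ι → ℝ} (hy : y ⬝ᵥ u = 0)
    {k : ι} (hk : (hN.eigenvectorBasis k).ofLp ⬝ᵥ y ≠ 0) : ν ≤ hN.eigenvalues k := by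
  set b := (hN.eigenvectorBasis k).ofLp
  -- If its eigenvalue is `0`, then `b ∈ span {u}` is orthogonal to `y`; otherwise `b ⊥ u`
  -- because `N` is symmetric and `N u = 0`.
  have hbu : b ⬝ᵥ u = 0 := by
    by_cases hμ : hN.eigenvalues k = 0
    · obtain ⟨c, hc⟩ := hker b (by rw [hN.mulVec_eigenvectorBasis, hμ, zero_smul])
      exact absurd (by rw [hc, smul_dotProduct, dotProduct_comm, hy, smul_zero]) hk
    · have : hN.eigenvalues k * (b ⬝ᵥ u) = 0 := by
        rw [← smul_eq_mul, ← smul_dotProduct, ← hN.mulVec_eigenvectorBasis, ← vecMul_transpose,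
          (isHermitian_iff_isSymm.1 hN).eq, ← dotProduct_mulVec, hNu, dotProduct_zero]
      exact (mul_eq_zero.1 this).resolve_left hμ
  have := hν b hbu
  rwa [OrthonormalBasis.dotProduct_self_apply, mul_one,
    ← eigenvalues_eq_dotProduct_mulVec] at this

theorem dotProduct_self_pow_mulVec_le (hN : N.IsHermitian) {u : ι → ℝ}
    (hNu : N *ᵥ u = 0) (hker : ∀ x, N *ᵥ x = 0 → ∃ c : ℝ, x = c • u)
    (hle : ∀ x, x ⬝ᵥ (N *ᵥ x) ≤ 2 * (x ⬝ᵥ x)) {ν : ℝ}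
    (hν : ∀ x, x ⬝ᵥ u = 0 → ν * (x ⬝ᵥ x) ≤ x ⬝ᵥ (N *ᵥ x)) {y : ι → ℝ} (hy : y ⬝ᵥ u = 0)
    (t : ℕ) :
    ((1 - (1 / 2 : ℝ) • N) ^ t *ᵥ y) ⬝ᵥ ((1 - (1 / 2 : ℝ) • N) ^ t *ᵥ y) ≤
      Real.exp (-(t * ν)) * (y ⬝ᵥ y) := by
  rw [hN.eigenvectorBasis.dotProduct_self_eq_sum_sq,
    hN.eigenvectorBasis.dotProduct_self_eq_sum_sq, Finset.mul_sum]
  refine Finset.sum_le_sum fun k _ => ?_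
  rw [hN.eigenvectorBasis_dotProduct_pow_mulVec, mul_pow]
  rcases eq_or_ne ((hN.eigenvectorBasis k).ofLp ⬝ᵥ y) 0 with hk | hk
  · simp [hk]
  have hμν := hN.le_eigenvalues_of_dotProduct_ne_zero hNu hker hν hy hk
  have hμ2 : hN.eigenvalues k ≤ 2 := by
    simpa [OrthonormalBasis.dotProduct_self_apply, ← eigenvalues_eq_dotProduct_mulVec] using
      hle (hN.eigenvectorBasis k).ofLp
  have hexp : 1 - 1 / 2 * hN.eigenvalues k ≤ Real.exp (-(ν / 2)) := by
    linarith [Real.add_one_le_exp (-(ν / 2))]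
  have h0 : 0 ≤ 1 - 1 / 2 * hN.eigenvalues k := by linarith
  gcongr
  calc ((1 - 1 / 2 * hN.eigenvalues k) ^ t) ^ 2 ≤ (Real.exp (-(ν / 2)) ^ t) ^ 2 := by gcongr
    _ = Real.exp (-(t * ν)) := by rw [← Real.exp_nat_mul, ← Real.exp_nat_mul]; ring_nf

end Matrix.IsHermitian

end Spectral

section Lambda2

variable {ι : Type*} [Fintype ι]

theorem dotProduct_self_nonneg (v : ι → ℝ) : 0 ≤ v ⬝ᵥ v :=
  Finset.sum_nonneg fun i _ => mul_self_nonneg (v i)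

theorem dotProduct_self_pos {v : ι → ℝ} (hv : v ≠ 0) : 0 < v ⬝ᵥ v :=
  (dotProduct_self_nonneg v).lt_of_ne' (dotProduct_self_eq_zero.not.2 hv)

theorem finrank_span_pair_of_dotProduct_eq_zero {u x : ι → ℝ} (hu : u ≠ 0) (hx : x ≠ 0)
    (hxu : x ⬝ᵥ u = 0) : Module.finrank ℝ (Submodule.span ℝ {u, x}) = 2 := by
  have hindep : LinearIndependent ℝ ![u, x] := by
    refine LinearIndependent.pair_iff.2 fun a b hab => ?_
    have hu' := congrArg (· ⬝ᵥ u) hab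
    have hx' := congrArg (· ⬝ᵥ x) hab
    simp only [add_dotProduct, smul_dotProduct, smul_eq_mul, zero_dotProduct, hxu,
      dotProduct_comm u x] at hu' hx'
    exact ⟨by simpa [dotProduct_self_eq_zero, hu] using hu',
      by simpa [dotProduct_self_eq_zero, hx] using hx'⟩
  rw [← Matrix.range_cons_cons_empty, finrank_span_eq_card hindep, Fintype.card_fin]

theorem dotProduct_mulVec_mul_le_of_mem_span_pair {M : Matrix ι ι ℝ} (hM : M.IsSymm)
    {u x z : ι → ℝ} (hMu : M *ᵥ u = 0) (hxu : x ⬝ᵥ u = 0) (hx : 0 ≤ x ⬝ᵥ (M *ᵥ x))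
    (hz : z ∈ Submodule.span ℝ {u, x}) :
    z ⬝ᵥ (M *ᵥ z) * (x ⬝ᵥ x) ≤ x ⬝ᵥ (M *ᵥ x) * (z ⬝ᵥ z) := by
  obtain ⟨a, b, rfl⟩ := Submodule.mem_span_pair.1 hz
  have huMx : u ⬝ᵥ (M *ᵥ x) = 0 := by
    rw [dotProduct_mulVec, ← hM.eq, vecMul_transpose, hMu, zero_dotProduct]
  simp only [mulVec_add, mulVec_smul, hMu, smul_zero, zero_add, add_dotProduct, dotProduct_add,
    smul_dotProduct, dotProduct_smul, smul_eq_mul, huMx, hxu, dotProduct_comm u x]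
  nlinarith [mul_nonneg (mul_nonneg (sq_nonneg a) (dotProduct_self_nonneg u)) hx]

theorem lambda2_mul_dotProduct_self_le {M : Matrix ι ι ℝ} (hM : M.IsSymm)
    (hpsd : ∀ x, 0 ≤ x ⬝ᵥ (M *ᵥ x)) {u x : ι → ℝ} (hu : u ≠ 0) (hMu : M *ᵥ u = 0)
    (hxu : x ⬝ᵥ u = 0) : lambda2 M * (x ⬝ᵥ x) ≤ x ⬝ᵥ (M *ᵥ x) := by
  rcases eq_or_ne x 0 with rfl | hx
  · simp
  have hxx := dotProduct_self_pos hx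
  -- Test the min-max definition on the plane `span {u, x}`.
  let U : {U : Submodule ℝ (ι → ℝ) // Module.finrank ℝ U = 2} :=
    ⟨_, finrank_span_pair_of_dotProduct_eq_zero hu hx hxu⟩
  have hbdd : BddBelow (Set.range
      fun V : {V : Submodule ℝ (ι → ℝ) // Module.finrank ℝ V = 2} =>
        ⨆ z : {z : ι → ℝ // z ∈ V.1 ∧ z ≠ 0}, (z.1 ⬝ᵥ M *ᵥ z.1) / (z.1 ⬝ᵥ z.1)) :=
    ⟨0, by
      rintro _ ⟨V, rfl⟩
      exact Real.iSup_nonneg fun z => div_nonneg (hpsd z.1) (dotProduct_self_nonneg z.1)⟩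
  have hsup : (⨆ z : {z : ι → ℝ // z ∈ U.1 ∧ z ≠ 0}, (z.1 ⬝ᵥ M *ᵥ z.1) / (z.1 ⬝ᵥ z.1)) ≤
      (x ⬝ᵥ M *ᵥ x) / (x ⬝ᵥ x) := by
    have : Nonempty {z : ι → ℝ // z ∈ U.1 ∧ z ≠ 0} :=
      ⟨⟨x, Submodule.subset_span (by simp), hx⟩⟩
    refine ciSup_le fun ⟨z, hz, hz0⟩ => ?_
    rw [div_le_div_iff₀ (dotProduct_self_pos hz0) hxx]
    exact dotProduct_mulVec_mul_le_of_mem_span_pair hM hMu hxu (hpsd x) hz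
  rw [← le_div_iff₀ hxx]
  exact (ciInf_le hbdd U).trans hsup

end Lambda2

noncomputable section

namespace WeightedGraph

variable {ι : Type*} [Fintype ι] (A : Matrix ι ι ℝ)

def degree (i : ι) : ℝ := ∑ j, A i j

def sqrtDegree (i : ι) : ℝ := √(degree A i)

def stationary (i : ι) : ℝ := degree A i / ∑ j, degree A j

variable {A}

theorem sum_sum_mul_left (f : ι → ℝ) : ∑ i, ∑ j, A i j * f i = ∑ i, degree A i * f i := by
  simp only [degree, Finset.sum_mul]

theorem sum_sum_mul_right (hA : A.IsSymm) (f : ι → ℝ) :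
    ∑ i, ∑ j, A i j * f j = ∑ i, degree A i * f i := by
  rw [Finset.sum_comm, ← sum_sum_mul_left]
  simp only [hA.apply]

theorem sum_sum_mul_sub_sq_le (hA : A.IsSymm) (hA0 : ∀ i j, 0 ≤ A i j) (w : ι → ℝ) :
    ∑ i, ∑ j, A i j * (w i - w j) ^ 2 ≤ 4 * ∑ i, degree A i * w i ^ 2 :=
  calc ∑ i, ∑ j, A i j * (w i - w j) ^ 2
      ≤ ∑ i, ∑ j, (2 * (A i j * w i ^ 2) + 2 * (A i j * w j ^ 2)) := by
        gcongr with i _ j _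
        nlinarith [hA0 i j, mul_nonneg (hA0 i j) (sq_nonneg (w i + w j))]
    _ = 4 * ∑ i, degree A i * w i ^ 2 := by
        simp only [Finset.sum_add_distrib, ← Finset.mul_sum, sum_sum_mul_left,
          sum_sum_mul_right hA]
        ring

theorem sqrtDegree_pos (hd : ∀ i, 0 < degree A i) (i : ι) : 0 < sqrtDegree A i :=
  Real.sqrt_pos.2 (hd i)

theorem sq_sqrtDegree {i : ι} (hi : 0 ≤ degree A i) : sqrtDegree A i ^ 2 = degree A i :=
  Real.sq_sqrt hi

theorem inv_sqrtDegree_mul_sqrtDegree (hd : ∀ i, 0 < degree A i) :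
    (sqrtDegree A)⁻¹ * sqrtDegree A = 1 :=
  funext fun i => inv_mul_cancel₀ (sqrtDegree_pos hd i).ne'

theorem inv_sqrtDegree_mul_dotProduct_sqrtDegree (hd : ∀ i, 0 < degree A i) (v : ι → ℝ) :
    ((sqrtDegree A)⁻¹ * v) ⬝ᵥ sqrtDegree A = ∑ i, v i := by
  refine Finset.sum_congr rfl fun i _ => ?_
  rw [Pi.mul_apply, Pi.inv_apply, mul_right_comm, inv_mul_cancel₀ (sqrtDegree_pos hd i).ne',
    one_mul]

theorem sqrtDegree_dotProduct_self (hd : ∀ i, 0 ≤ degree A i) :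
    sqrtDegree A ⬝ᵥ sqrtDegree A = ∑ i, degree A i :=
  Finset.sum_congr rfl fun i _ => by rw [← sq, sq_sqrtDegree (hd i)]

theorem sum_degree_pos [Nonempty ι] (hd : ∀ i, 0 < degree A i) : 0 < ∑ i, degree A i :=
  Finset.sum_pos (fun i _ => hd i) Finset.univ_nonempty

theorem inv_sqrtDegree_mul_stationary (hd : ∀ i, 0 < degree A i) :
    (sqrtDegree A)⁻¹ * stationary A = (∑ i, degree A i)⁻¹ • sqrtDegree A := by
  ext i
  have := (sqrtDegree_pos hd i).ne'
  simp only [Pi.mul_apply, Pi.inv_apply, Pi.smul_apply, smul_eq_mul, stationary]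
  rw [← sq_sqrtDegree (hd i).le]
  field_simp

theorem inv_sqrtDegree_mul_sub_stationary_dotProduct_sqrtDegree [Nonempty ι]
    (hd : ∀ i, 0 < degree A i) {p : ι → ℝ} (hp1 : ∑ i, p i = 1) :
    ((sqrtDegree A)⁻¹ * (p - stationary A)) ⬝ᵥ sqrtDegree A = 0 := by
  simp only [inv_sqrtDegree_mul_dotProduct_sqrtDegree hd, Pi.sub_apply, Finset.sum_sub_distrib,
    hp1, stationary, ← Finset.sum_div, div_self (sum_degree_pos hd).ne', sub_self]

theorem inv_sqrtDegree_mul_sub_stationary_dotProduct_self_le [Nonempty ι]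
    (hd : ∀ i, 0 < degree A i) {dmin : ℝ} (hdmin : ∀ i, dmin ≤ degree A i) (hdmin0 : 0 < dmin)
    {p : ι → ℝ} (hp : ∀ i, 0 ≤ p i) (hp1 : ∑ i, p i = 1) :
    ((sqrtDegree A)⁻¹ * (p - stationary A)) ⬝ᵥ ((sqrtDegree A)⁻¹ * (p - stationary A)) ≤
      dmin⁻¹ := by
  rw [mul_sub, inv_sqrtDegree_mul_stationary hd]
  set q := (sqrtDegree A)⁻¹ * p
  have hqs : q ⬝ᵥ sqrtDegree A = 1 := (inv_sqrtDegree_mul_dotProduct_sqrtDegree hd p).trans hp1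
  have hexpand : (q - (∑ i, degree A i)⁻¹ • sqrtDegree A) ⬝ᵥ
      (q - (∑ i, degree A i)⁻¹ • sqrtDegree A) = q ⬝ᵥ q - (∑ i, degree A i)⁻¹ := by
    have := (sum_degree_pos hd).ne'
    simp only [sub_dotProduct, dotProduct_sub, smul_dotProduct, dotProduct_smul, smul_eq_mul,
      hqs, dotProduct_comm (sqrtDegree A) q, sqrtDegree_dotProduct_self fun i => (hd i).le]
    field_simp
    ring
  have hqq : q ⬝ᵥ q ≤ dmin⁻¹ :=
    calc q ⬝ᵥ q = ∑ i, p i ^ 2 / degree A i := Finset.sum_congr rfl fun i _ => by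
          simp only [q, Pi.mul_apply, Pi.inv_apply]
          rw [← sq_sqrtDegree (hd i).le]
          ring
      _ ≤ ∑ i, p i / dmin := by
          have hp_le : ∀ i, p i ≤ 1 := fun i =>
            hp1 ▸ Finset.single_le_sum (fun j _ => hp j) (Finset.mem_univ i)
          gcongr with i
          · exact hp i
          · nlinarith [hp i, hp_le i]
          · exact hdmin i
      _ = dmin⁻¹ := by rw [← Finset.sum_div, hp1, one_div]
  rw [hexpand]
  linarith [inv_pos.2 (sum_degree_pos hd)]

variable [DecidableEq ι] (A)

def laplacian : Matrix ι ι ℝ := diagonal (degree A) - A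

def normalizedLaplacian : Matrix ι ι ℝ :=
  diagonal (sqrtDegree A)⁻¹ * laplacian A * diagonal (sqrtDegree A)⁻¹

def lazyWalk : Matrix ι ι ℝ := (1 / 2 : ℝ) • 1 + (1 / 2 : ℝ) • (A * diagonal (degree A)⁻¹)

variable {A}

theorem laplacian_mulVec_apply (v : ι → ℝ) (i : ι) :
    (laplacian A *ᵥ v) i = ∑ j, A i j * (v i - v j) := by
  rw [laplacian, sub_mulVec, Pi.sub_apply, mulVec_diagonal, degree, Finset.sum_mul]
  simp only [mulVec, dotProduct, mul_sub, Finset.sum_sub_distrib]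

theorem dotProduct_laplacian_mulVec (hA : A.IsSymm) (v : ι → ℝ) :
    v ⬝ᵥ (laplacian A *ᵥ v) = (∑ i, ∑ j, A i j * (v i - v j) ^ 2) / 2 := by
  have key : ∀ i j, v i * (A i j * (v i - v j)) =
      (A i j * (v i - v j) ^ 2 + A i j * v i ^ 2 - A i j * v j ^ 2) / 2 := fun i j => by ring
  simp only [dotProduct, laplacian_mulVec_apply, Finset.mul_sum, key, ← Finset.sum_div,
    Finset.sum_sub_distrib, Finset.sum_add_distrib, sum_sum_mul_left, sum_sum_mul_right hA,
    add_sub_cancel_right]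

theorem laplacian_mulVec_one : laplacian A *ᵥ 1 = 0 := by
  ext i
  simp [laplacian_mulVec_apply]

theorem dotProduct_normalizedLaplacian_mulVec (x : ι → ℝ) :
    x ⬝ᵥ (normalizedLaplacian A *ᵥ x) =
      ((sqrtDegree A)⁻¹ * x) ⬝ᵥ (laplacian A *ᵥ ((sqrtDegree A)⁻¹ * x)) := by
  simp only [normalizedLaplacian, ← mulVec_mulVec, diagonal_mulVec_eq_mul, dotProduct,
    Pi.mul_apply]
  exact Finset.sum_congr rfl fun i _ => by ring

theorem normalizedLaplacian_isSymm (hA : A.IsSymm) : (normalizedLaplacian A).IsSymm := by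
  have hL : (laplacian A).IsSymm := (isSymm_diagonal _).sub hA
  simp only [IsSymm, normalizedLaplacian, transpose_mul, diagonal_transpose, hL.eq,
    Matrix.mul_assoc]

theorem dotProduct_normalizedLaplacian_mulVec_nonneg (hA : A.IsSymm) (hA0 : ∀ i j, 0 ≤ A i j)
    (x : ι → ℝ) : 0 ≤ x ⬝ᵥ (normalizedLaplacian A *ᵥ x) := by
  rw [dotProduct_normalizedLaplacian_mulVec, dotProduct_laplacian_mulVec hA]
  exact div_nonneg (Finset.sum_nonneg fun i _ => Finset.sum_nonneg fun j _ =>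
    mul_nonneg (hA0 i j) (sq_nonneg _)) zero_le_two

theorem dotProduct_normalizedLaplacian_mulVec_le (hA : A.IsSymm) (hA0 : ∀ i j, 0 ≤ A i j)
    (hd : ∀ i, 0 < degree A i) (x : ι → ℝ) :
    x ⬝ᵥ (normalizedLaplacian A *ᵥ x) ≤ 2 * (x ⬝ᵥ x) := by
  have hx : x ⬝ᵥ x = ∑ i, degree A i * ((sqrtDegree A)⁻¹ * x) i ^ 2 := by
    refine Finset.sum_congr rfl fun i _ => ?_
    have := (sqrtDegree_pos hd i).ne'
    simp only [Pi.mul_apply, Pi.inv_apply]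
    field_simp
    rw [sq_sqrtDegree (hd i).le]
  rw [dotProduct_normalizedLaplacian_mulVec, dotProduct_laplacian_mulVec hA, hx]
  linarith [sum_sum_mul_sub_sq_le hA hA0 ((sqrtDegree A)⁻¹ * x)]

theorem normalizedLaplacian_mulVec_sqrtDegree (hd : ∀ i, 0 < degree A i) :
    normalizedLaplacian A *ᵥ sqrtDegree A = 0 := by
  simp only [normalizedLaplacian, ← mulVec_mulVec, diagonal_mulVec_eq_mul,
    inv_sqrtDegree_mul_sqrtDegree hd, laplacian_mulVec_one, mul_zero]

theorem eq_smul_sqrtDegree_of_normalizedLaplacian_mulVec_eq_zero (hd : ∀ i, 0 < degree A i)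
    (hconn : ∀ x, laplacian A *ᵥ x = 0 → ∃ c : ℝ, ∀ i, x i = c) {x : ι → ℝ}
    (hx : normalizedLaplacian A *ᵥ x = 0) : ∃ c : ℝ, x = c • sqrtDegree A := by
  rw [normalizedLaplacian, ← mulVec_mulVec, ← mulVec_mulVec, diagonal_mulVec_eq_mul,
    diagonal_mulVec_eq_mul] at hx
  have hL : laplacian A *ᵥ ((sqrtDegree A)⁻¹ * x) = 0 := funext fun i =>
    (mul_eq_zero.1 (congrFun hx i)).resolve_left (inv_ne_zero (sqrtDegree_pos hd i).ne')
  obtain ⟨c, hc⟩ := hconn _ hL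
  refine ⟨c, funext fun i => ?_⟩
  rw [Pi.smul_apply, smul_eq_mul, ← hc i, Pi.mul_apply, Pi.inv_apply]
  field_simp [(sqrtDegree_pos hd i).ne']

theorem lazyWalk_eq (hd : ∀ i, 0 < degree A i) :
    lazyWalk A = diagonal (sqrtDegree A) * (1 - (1 / 2 : ℝ) • normalizedLaplacian A) *
      diagonal (sqrtDegree A)⁻¹ := by
  ext i j
  have hi := (sqrtDegree_pos hd i).ne'
  have hj := (sqrtDegree_pos hd j).ne'
  have hdj := (hd j).ne'
  have hsq := sq_sqrtDegree (hd j).le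
  simp only [lazyWalk, normalizedLaplacian, laplacian, mul_diagonal, diagonal_mul,
    Matrix.add_apply, Matrix.sub_apply, Matrix.smul_apply, one_apply, diagonal_apply, Pi.inv_apply,
    smul_eq_mul]
  split_ifs with h
  · subst h
    field_simp
    rw [hsq]
    ring
  · field_simp
    rw [hsq]
    ring

theorem lazyWalk_pow (hd : ∀ i, 0 < degree A i) (t : ℕ) :
    lazyWalk A ^ t = diagonal (sqrtDegree A) * (1 - (1 / 2 : ℝ) • normalizedLaplacian A) ^ t *
      diagonal (sqrtDegree A)⁻¹ := by
  have hinv : diagonal (sqrtDegree A)⁻¹ * diagonal (sqrtDegree A) = 1 := by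
    rw [diagonal_mul_diagonal, ← Pi.mul_def, inv_sqrtDegree_mul_sqrtDegree hd]
    exact diagonal_one
  induction t with
  | zero =>
    rw [pow_zero, pow_zero, Matrix.mul_one, diagonal_mul_diagonal, ← Pi.mul_def, mul_comm,
      inv_sqrtDegree_mul_sqrtDegree hd]
    exact diagonal_one.symm
  | succ t ih =>
    rw [pow_succ, ih, lazyWalk_eq hd, pow_succ]
    simp only [Matrix.mul_assoc]
    rw [← Matrix.mul_assoc (diagonal _⁻¹) (diagonal _), hinv, Matrix.one_mul]

theorem pow_mulVec_sqrtDegree (hd : ∀ i, 0 < degree A i) (t : ℕ) :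
    (1 - (1 / 2 : ℝ) • normalizedLaplacian A) ^ t *ᵥ sqrtDegree A = sqrtDegree A := by
  induction t with
  | zero => rw [pow_zero, one_mulVec]
  | succ t ih =>
    rw [pow_succ, ← mulVec_mulVec, sub_mulVec, smul_mulVec,
      normalizedLaplacian_mulVec_sqrtDegree hd, smul_zero, sub_zero, one_mulVec, ih]

theorem lazyWalk_pow_mulVec_sub_stationary (hd : ∀ i, 0 < degree A i) (p : ι → ℝ) (t : ℕ) :
    lazyWalk A ^ t *ᵥ p - stationary A =
      sqrtDegree A * ((1 - (1 / 2 : ℝ) • normalizedLaplacian A) ^ t *ᵥ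
        ((sqrtDegree A)⁻¹ * (p - stationary A))) := by
  have hπ : sqrtDegree A * ((sqrtDegree A)⁻¹ * stationary A) = stationary A := by
    rw [← mul_assoc, mul_comm (sqrtDegree A), inv_sqrtDegree_mul_sqrtDegree hd, one_mul]
  rw [lazyWalk_pow hd, ← mulVec_mulVec, ← mulVec_mulVec, diagonal_mulVec_eq_mul,
    diagonal_mulVec_eq_mul, mul_sub, mulVec_sub, inv_sqrtDegree_mul_stationary hd, mulVec_smul,
    pow_mulVec_sqrtDegree hd, ← inv_sqrtDegree_mul_stationary hd, mul_sub, hπ]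

theorem lambda2_normalizedLaplacian_mul_le [Nonempty ι] (hA : A.IsSymm)
    (hA0 : ∀ i j, 0 ≤ A i j) (hd : ∀ i, 0 < degree A i) {x : ι → ℝ} (hx : x ⬝ᵥ sqrtDegree A = 0) :
    lambda2 (normalizedLaplacian A) * (x ⬝ᵥ x) ≤ x ⬝ᵥ (normalizedLaplacian A *ᵥ x) :=
  lambda2_mul_dotProduct_self_le (normalizedLaplacian_isSymm hA)
    (dotProduct_normalizedLaplacian_mulVec_nonneg hA hA0)
    (fun h => (sqrtDegree_pos hd (Classical.arbitrary ι)).ne' (congrFun h _))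
    (normalizedLaplacian_mulVec_sqrtDegree hd) hx

theorem sq_sum_abs_lazyWalk_pow_mulVec_sub_stationary_le [Nonempty ι] (hA : A.IsSymm)
    (hA0 : ∀ i j, 0 ≤ A i j) (hd : ∀ i, 0 < degree A i)
    (hconn : ∀ x, laplacian A *ᵥ x = 0 → ∃ c : ℝ, ∀ i, x i = c) {dmin : ℝ}
    (hdmin : ∀ i, dmin ≤ degree A i) (hdmin0 : 0 < dmin) {p : ι → ℝ} (hp : ∀ i, 0 ≤ p i)
    (hp1 : ∑ i, p i = 1) (t : ℕ) :
    (∑ i, |(lazyWalk A ^ t *ᵥ p - stationary A) i|) ^ 2 ≤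
      Real.exp (-(t * lambda2 (normalizedLaplacian A))) * (∑ i, degree A i) / dmin := by
  set y := (sqrtDegree A)⁻¹ * (p - stationary A)
  set z := (1 - (1 / 2 : ℝ) • normalizedLaplacian A) ^ t *ᵥ y
  have hN : (normalizedLaplacian A).IsHermitian :=
    isHermitian_iff_isSymm.2 (normalizedLaplacian_isSymm hA)
  have hz : z ⬝ᵥ z ≤ Real.exp (-(t * lambda2 (normalizedLaplacian A))) * (y ⬝ᵥ y) :=
    hN.dotProduct_self_pow_mulVec_le (normalizedLaplacian_mulVec_sqrtDegree hd)
      (fun _ => eq_smul_sqrtDegree_of_normalizedLaplacian_mulVec_eq_zero hd hconn)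
      (dotProduct_normalizedLaplacian_mulVec_le hA hA0 hd)
      (fun _ => lambda2_normalizedLaplacian_mul_le hA hA0 hd)
      (inv_sqrtDegree_mul_sub_stationary_dotProduct_sqrtDegree hd hp1) t
  have hy := inv_sqrtDegree_mul_sub_stationary_dotProduct_self_le hd hdmin hdmin0 hp hp1
  calc (∑ i, |(lazyWalk A ^ t *ᵥ p - stationary A) i|) ^ 2
      = (∑ i, sqrtDegree A i * |z i|) ^ 2 := by
        rw [lazyWalk_pow_mulVec_sub_stationary hd]
        simp only [Pi.mul_apply, abs_mul, abs_of_pos (sqrtDegree_pos hd _)]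
        rfl
    _ ≤ (∑ i, sqrtDegree A i ^ 2) * ∑ i, |z i| ^ 2 := Finset.sum_mul_sq_le_sq_mul_sq _ _ _
    _ = (∑ i, degree A i) * (z ⬝ᵥ z) := by
        simp only [sq_sqrtDegree (hd _).le, sq_abs, dotProduct, ← sq]
    _ ≤ (∑ i, degree A i) * (Real.exp (-(t * lambda2 (normalizedLaplacian A))) * dmin⁻¹) := by
        have := sum_degree_pos hd
        gcongr
        exact hz.trans (mul_le_mul_of_nonneg_left hy (Real.exp_pos _).le)
    _ = _ := by ring

theorem sum_abs_lazyWalk_pow_mulVec_sub_stationary_le [Nonempty ι] (hA : A.IsSymm)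
    (hA0 : ∀ i j, 0 ≤ A i j) (hd : ∀ i, 0 < degree A i)
    (hconn : ∀ x, laplacian A *ᵥ x = 0 → ∃ c : ℝ, ∀ i, x i = c) {dmin : ℝ}
    (hdmin : ∀ i, dmin ≤ degree A i) (hdmin0 : 0 < dmin) {p : ι → ℝ} (hp : ∀ i, 0 ≤ p i)
    (hp1 : ∑ i, p i = 1) (t : ℕ) :
    ∑ i, |(lazyWalk A ^ t *ᵥ p - stationary A) i| ≤
      Real.exp (-(t : ℝ) * lambda2 (normalizedLaplacian A) / 2) * ((∑ i, degree A i) / dmin) := by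
  have hratio : 1 ≤ (∑ i, degree A i) / dmin := by
    obtain ⟨i⟩ := ‹Nonempty ι›
    rw [one_le_div hdmin0]
    exact (hdmin i).trans (Finset.single_le_sum (fun j _ => (hd j).le) (Finset.mem_univ i))
  refine le_of_pow_le_pow_left₀ two_ne_zero
    (mul_nonneg (Real.exp_pos _).le (zero_le_one.trans hratio)) ?_
  calc (∑ i, |(lazyWalk A ^ t *ᵥ p - stationary A) i|) ^ 2
      ≤ Real.exp (-(t * lambda2 (normalizedLaplacian A))) * ((∑ i, degree A i) / dmin) := by
        rw [← mul_div_assoc]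
        exact sq_sum_abs_lazyWalk_pow_mulVec_sub_stationary_le hA hA0 hd hconn hdmin hdmin0 hp
          hp1 t
    _ ≤ Real.exp (-(t * lambda2 (normalizedLaplacian A))) * ((∑ i, degree A i) / dmin) ^ 2 := by
        gcongr
        nlinarith
    _ = _ := by
        rw [mul_pow, ← Real.exp_nat_mul]
        ring_nf

end WeightedGraph

end

open WeightedGraph

theorem lazy_walk_mixing_general (n : ℕ) (A : Matrix (Fin n) (Fin n) ℝ)
    (hsym : A.IsSymm) (hnonneg : ∀ i j, 0 ≤ A i j)
    (hdpos : ∀ i, 0 < ∑ j, A i j)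
    (L : Matrix (Fin n) (Fin n) ℝ)
    (hL : L = Matrix.diagonal (fun i => ∑ j, A i j) - A)
    (hconn : ∀ x : Fin n → ℝ, L.mulVec x = 0 → ∃ c : ℝ, ∀ i, x i = c)
    (X : Matrix (Fin n) (Fin n) ℝ)
    (hX : X = (1 / 2 : ℝ) • (1 : Matrix (Fin n) (Fin n) ℝ)
        + (1 / 2 : ℝ) • (A * Matrix.diagonal (fun i => (∑ j, A i j)⁻¹)))
    (pi : Fin n → ℝ) (hpi : pi = fun i => (∑ j, A i j) / ∑ i, ∑ j, A i j)
    (nu2 : ℝ)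
    (hnu2 : nu2 = lambda2 (Matrix.diagonal (fun i => (Real.sqrt (∑ j, A i j))⁻¹)
        * L * Matrix.diagonal (fun i => (Real.sqrt (∑ j, A i j))⁻¹)))
    (dmax dmin : ℝ)
    (hdmax : IsGreatest (Set.range fun i => ∑ j, A i j) dmax)
    (hdmin : IsLeast (Set.range fun i => ∑ j, A i j) dmin)
    (p : Fin n → ℝ) (hp : ∀ i, 0 ≤ p i) (hp1 : ∑ i, p i = 1) (t : ℕ) :
    ∑ i, |((X ^ t).mulVec p) i - pi i|
      ≤ Real.exp (-(t : ℝ) * nu2 / 2) * n * dmax / dmin := by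
  subst hL hX hpi hnu2
  obtain ⟨i₀, hi₀⟩ := hdmin.1
  have : Nonempty (Fin n) := ⟨i₀⟩
  have hdmin0 : 0 < dmin := hi₀ ▸ hdpos i₀
  have hsum : ∑ i, degree A i ≤ n * dmax := by
    simpa [degree] using Finset.sum_le_card_nsmul Finset.univ _ _ fun i _ => hdmax.2 ⟨i, rfl⟩
  change ∑ i, |(lazyWalk A ^ t *ᵥ p) i - stationary A i| ≤
    Real.exp (-(t : ℝ) * lambda2 (normalizedLaplacian A) / 2) * n * dmax / dmin
  calc ∑ i, |(lazyWalk A ^ t *ᵥ p) i - stationary A i|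
      ≤ Real.exp (-(t : ℝ) * lambda2 (normalizedLaplacian A) / 2) * ((∑ i, degree A i) / dmin) :=
        sum_abs_lazyWalk_pow_mulVec_sub_stationary_le hsym hnonneg hdpos hconn
          (fun i => hdmin.2 ⟨i, rfl⟩) hdmin0 hp hp1 t
    _ ≤ Real.exp (-(t : ℝ) * lambda2 (normalizedLaplacian A) / 2) * (n * dmax / dmin) := by
        gcongr
    _ = _ := by ring

/-- mixing of the lazy random walk: for any probability distribution `p`
and any `t`, `‖X^t p - π‖₁ ≤ e^{-t ν₂/2} · n · d_max / d_min`, where `ν₂` is the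
second smallest eigenvalue of the normalized Laplacian `D^{-1/2} L D^{-1/2}`. -/
theorem lazy_walk_mixing (n : ℕ) (A : Matrix (Fin n) (Fin n) ℝ)
    (hsym : A.IsSymm) (hnonneg : ∀ i j, 0 ≤ A i j) (hloop : ∀ i, A i i = 0)
    (hdpos : ∀ i, 0 < ∑ j, A i j)
    (L : Matrix (Fin n) (Fin n) ℝ)
    (hL : L = Matrix.diagonal (fun i => ∑ j, A i j) - A)
    (hconn : ∀ x : Fin n → ℝ, L.mulVec x = 0 → ∃ c : ℝ, ∀ i, x i = c)
    (X : Matrix (Fin n) (Fin n) ℝ)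
    (hX : X = (1 / 2 : ℝ) • (1 : Matrix (Fin n) (Fin n) ℝ)
        + (1 / 2 : ℝ) • (A * Matrix.diagonal (fun i => (∑ j, A i j)⁻¹)))
    (pi : Fin n → ℝ) (hpi : pi = fun i => (∑ j, A i j) / ∑ i, ∑ j, A i j)
    (nu2 : ℝ)
    (hnu2 : nu2 = lambda2 (Matrix.diagonal (fun i => (Real.sqrt (∑ j, A i j))⁻¹)
        * L * Matrix.diagonal (fun i => (Real.sqrt (∑ j, A i j))⁻¹)))
    (dmax dmin : ℝ)
    (hdmax : IsGreatest (Set.range fun i => ∑ j, A i j) dmax)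
    (hdmin : IsLeast (Set.range fun i => ∑ j, A i j) dmin)
    (p : Fin n → ℝ) (hp : ∀ i, 0 ≤ p i) (hp1 : ∑ i, p i = 1) (t : ℕ) :
    ∑ i, |((X ^ t).mulVec p) i - pi i|
      ≤ Real.exp (-(t : ℝ) * nu2 / 2) * n * dmax / dmin :=
  lazy_walk_mixing_general n A hsym hnonneg hdpos L hL hconn X hX pi hpi nu2 hnu2 dmax dmin hdmax
    hdmin p hp hp1 t
end

section
/- If H is a graph whose Laplacian satisfies (1-ε) L_G ⪯ L_H ⪯ (1+ε) L_G for 0 < ε < 1/3 (a spectral ε-sparsifier), then λ₂(D_H^{-1/2} L_H D_H^{-1/2}) >= (1 - 3ε) λ₂(D_G^{-1/2} L_G D_G^{-1/2}). -/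
/-!
Substituting `x = D^{1/2} y` turns the Rayleigh quotient of `D^{-1/2} L D^{-1/2}` into
`yᵀ L y / yᵀ D y`. The sparsifier bounds give `yᵀ L_H y ≥ (1 - ε) yᵀ L_G y` and, on the diagonal,
`D_H ≤ (1 + ε) D_G`, so the quotient of `H` at `D_H^{1/2} y` is at least
`(1 - ε) / (1 + ε) ≥ 1 - 3ε` times the quotient of `G` at `D_G^{1/2} y`. The linear isomorphism
`D_G^{1/2} D_H^{-1/2}` maps planes to planes, so the min-max formula for `λ₂` carries the bound
over from quotients to eigenvalues.
-/

open Matrix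

section Rayleigh

variable {ι : Type*} [Fintype ι]

noncomputable def rayleigh (M : Matrix ι ι ℝ) (x : ι → ℝ) : ℝ :=
  x ⬝ᵥ M *ᵥ x / (x ⬝ᵥ x)

theorem abs_rayleigh_le (M : Matrix ι ι ℝ) (x : ι → ℝ) :
    |rayleigh M x| ≤ ∑ i, ∑ j, |M i j| := by
  have hxx : ∀ i j, |x i * x j| ≤ x ⬝ᵥ x := fun i j => by
    have hi := Finset.single_le_sum (fun k _ => mul_self_nonneg (x k)) (Finset.mem_univ i)
    have hj := Finset.single_le_sum (fun k _ => mul_self_nonneg (x k)) (Finset.mem_univ j)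
    rw [abs_le, dotProduct]
    constructor <;> nlinarith [sq_nonneg (x i - x j), sq_nonneg (x i + x j)]
  have hquad : |x ⬝ᵥ M *ᵥ x| ≤ (∑ i, ∑ j, |M i j|) * (x ⬝ᵥ x) := calc
    |x ⬝ᵥ M *ᵥ x| = |∑ i, ∑ j, M i j * (x i * x j)| := by
        simp only [dotProduct, mulVec, Finset.mul_sum]
        congr! 3 with i _ j _
        ring
    _ ≤ ∑ i, ∑ j, |M i j * (x i * x j)| :=
        (Finset.abs_sum_le_sum_abs _ _).trans
          (Finset.sum_le_sum fun i _ => Finset.abs_sum_le_sum_abs _ _)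
    _ ≤ ∑ i, ∑ j, |M i j| * (x ⬝ᵥ x) := by
        gcongr with i _ j _
        rw [abs_mul]
        exact mul_le_mul_of_nonneg_left (hxx i j) (abs_nonneg _)
    _ = (∑ i, ∑ j, |M i j|) * (x ⬝ᵥ x) := by simp only [Finset.sum_mul]
  have hxx_nonneg : 0 ≤ x ⬝ᵥ x := Finset.sum_nonneg fun i _ => mul_self_nonneg (x i)
  rw [rayleigh, abs_div, abs_of_nonneg hxx_nonneg]
  exact div_le_of_le_mul₀ hxx_nonneg (by positivity) hquad

theorem bddAbove_range_rayleigh (M : Matrix ι ι ℝ) (p : (ι → ℝ) → Prop) :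
    BddAbove (Set.range fun x : {x // p x} => rayleigh M x) :=
  ⟨∑ i, ∑ j, |M i j|, by rintro _ ⟨x, rfl⟩; exact (abs_le.1 (abs_rayleigh_le M x)).2⟩

theorem Submodule.nonempty_mem_ne_zero_of_finrank_pos {K V : Type*} [DivisionRing K]
    [AddCommGroup V] [Module K V] {U : Submodule K V} (hU : 0 < Module.finrank K U) :
    Nonempty {x // x ∈ U ∧ x ≠ 0} := by
  obtain ⟨x, hxU, hx0⟩ := U.exists_mem_ne_zero_of_ne_bot fun h => by subst h; simp at hU
  exact ⟨x, hxU, hx0⟩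

theorem neg_le_iSup_rayleigh (M : Matrix ι ι ℝ) {U : Submodule ℝ (ι → ℝ)}
    (hU : 0 < Module.finrank ℝ U) :
    -(∑ i, ∑ j, |M i j|) ≤ ⨆ x : {x // x ∈ U ∧ x ≠ 0}, rayleigh M x := by
  obtain ⟨x⟩ := Submodule.nonempty_mem_ne_zero_of_finrank_pos hU
  exact (abs_le.1 (abs_rayleigh_le M x)).1.trans (le_ciSup (bddAbove_range_rayleigh M _) x)

theorem mul_lambda2_le_lambda2 {M M' : Matrix ι ι ℝ} {c : ℝ} (hc : 0 ≤ c)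
    (e e' : (ι → ℝ) ≃ₗ[ℝ] (ι → ℝ)) (h : ∀ y ≠ 0, c * rayleigh M (e y) ≤ rayleigh M' (e' y)) :
    c * lambda2 M ≤ lambda2 M' := by
  rcases isEmpty_or_nonempty {U : Submodule ℝ (ι → ℝ) // Module.finrank ℝ U = 2} with _ | _
  · -- no planes: both infima take the junk value `0`
    rw [lambda2, lambda2, Real.iInf_of_isEmpty, Real.iInf_of_isEmpty, mul_zero]
  refine le_ciInf fun U => ?_
  let W : {U : Submodule ℝ (ι → ℝ) // Module.finrank ℝ U = 2} :=
    ⟨U.1.map (e'.symm.trans e : (ι → ℝ) →ₗ[ℝ] (ι → ℝ)), (LinearEquiv.finrank_map_eq _ _).trans U.2⟩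
  have : Nonempty {x // x ∈ W.1 ∧ x ≠ 0} :=
    Submodule.nonempty_mem_ne_zero_of_finrank_pos (two_pos.trans_eq W.2.symm)
  have hbdd : BddBelow (Set.range fun V : {U : Submodule ℝ (ι → ℝ) // Module.finrank ℝ U = 2} =>
      ⨆ x : {x // x ∈ V.1 ∧ x ≠ 0}, rayleigh M x) :=
    ⟨_, by rintro _ ⟨V, rfl⟩; exact neg_le_iSup_rayleigh M (two_pos.trans_eq V.2.symm)⟩
  calc c * lambda2 M ≤ c * ⨆ x : {x // x ∈ W.1 ∧ x ≠ 0}, rayleigh M x :=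
        mul_le_mul_of_nonneg_left (ciInf_le hbdd W) hc
    _ = ⨆ x : {x // x ∈ W.1 ∧ x ≠ 0}, c * rayleigh M x := Real.mul_iSup_of_nonneg hc _
    _ ≤ ⨆ x : {x // x ∈ U.1 ∧ x ≠ 0}, rayleigh M' x := ciSup_le fun ⟨x, hxW, hx0⟩ => by
        rw [Submodule.mem_map_equiv] at hxW
        obtain ⟨y, rfl⟩ := e.surjective x
        have hy0 : y ≠ 0 := by rintro rfl; exact hx0 (map_zero e)
        refine (h y hy0).trans (le_ciSup (bddAbove_range_rayleigh M' _) ⟨e' y, ?_, ?_⟩)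
        · simpa using hxW
        · simpa using hy0

theorem dotProduct_mulVec_le_of_posSemidef_sub {A B : Matrix ι ι ℝ} (h : (B - A).PosSemidef)
    (x : ι → ℝ) : x ⬝ᵥ A *ᵥ x ≤ x ⬝ᵥ B *ᵥ x := by
  simpa [sub_mulVec] using h.dotProduct_mulVec_nonneg x

end Rayleigh

section Normalization

variable {ι : Type*} [Fintype ι] [DecidableEq ι]

theorem dotProduct_diagonal_mul_mul_diagonal_mulVec {R : Type*} [CommSemiring R]
    (s : ι → R) (L : Matrix ι ι R) (x : ι → R) :
    x ⬝ᵥ (diagonal s * L * diagonal s) *ᵥ x = (s * x) ⬝ᵥ L *ᵥ (s * x) := by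
  have hD : ∀ v, diagonal s *ᵥ v = s * v := fun v => funext (mulVec_diagonal s v)
  rw [← mulVec_mulVec, ← mulVec_mulVec, hD, hD]
  exact Finset.sum_congr rfl fun i _ => by simp only [Pi.mul_apply]; ring

theorem rayleigh_diagonal_inv_sqrt_mul_mul {d : ι → ℝ} (hd : ∀ i, 0 < d i) (L : Matrix ι ι ℝ)
    (y : ι → ℝ) :
    rayleigh (diagonal (fun i => (√(d i))⁻¹) * L * diagonal (fun i => (√(d i))⁻¹))
        ((fun i => √(d i)) * y) = y ⬝ᵥ L *ᵥ y / (y ⬝ᵥ diagonal d *ᵥ y) := by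
  have hsqrt : ∀ i, √(d i) ≠ 0 := fun i => (Real.sqrt_pos.2 (hd i)).ne'
  have hy : (fun i => (√(d i))⁻¹) * ((fun i => √(d i)) * y) = y :=
    funext fun i => inv_mul_cancel_left₀ (hsqrt i) (y i)
  rw [rayleigh, dotProduct_diagonal_mul_mul_diagonal_mulVec, hy]
  congr 1
  refine Finset.sum_congr rfl fun i _ => ?_
  rw [mulVec_diagonal, Pi.mul_apply]
  linear_combination y i * y i * Real.mul_self_sqrt (hd i).le

theorem dotProduct_diagonal_mulVec_pos {d : ι → ℝ} (hd : ∀ i, 0 < d i) {x : ι → ℝ} (hx : x ≠ 0) :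
    0 < x ⬝ᵥ diagonal d *ᵥ x :=
  (posDef_diagonal_iff.2 hd).dotProduct_mulVec_pos hx

theorem dotProduct_diagonal_mulVec_mono {d d' : ι → ℝ} (h : d ≤ d') (x : ι → ℝ) :
    x ⬝ᵥ diagonal d *ᵥ x ≤ x ⬝ᵥ diagonal d' *ᵥ x :=
  dotProduct_mulVec_le_of_posSemidef_sub
    (by rw [diagonal_sub]; exact posSemidef_diagonal_iff.2 fun i => sub_nonneg.2 (h i)) x

end Normalization

noncomputable def diagonalScaling {ι : Type*} (w : ι → ℝ) (hw : ∀ i, w i ≠ 0) :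
    (ι → ℝ) ≃ₗ[ℝ] (ι → ℝ) :=
  LinearEquiv.piCongrRight fun i => LinearEquiv.smulOfNeZero ℝ ℝ (w i) (hw i)

theorem diagonalScaling_apply {ι : Type*} (w : ι → ℝ) (hw : ∀ i, w i ≠ 0) (x : ι → ℝ) :
    diagonalScaling w hw x = w * x :=
  rfl

theorem one_sub_three_mul_div_le_div {ε a b p q : ℝ} (hε : 0 ≤ ε) (hε1 : ε ≤ 1) (ha : 0 ≤ a)
    (hab : (1 - ε) * a ≤ b) (hq : 0 < q) (hqp : q ≤ (1 + ε) * p) :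
    (1 - 3 * ε) * (a / p) ≤ b / q := by
  have hp : 0 < p := pos_of_mul_pos_right (hq.trans_le hqp) (by linarith)
  calc (1 - 3 * ε) * (a / p) ≤ (1 - ε) / (1 + ε) * (a / p) := by
        gcongr
        rw [le_div_iff₀ (by positivity)]
        nlinarith
    _ = (1 - ε) * a / ((1 + ε) * p) := div_mul_div_comm _ _ _ _
    _ ≤ b / ((1 + ε) * p) := by gcongr
    _ ≤ b / q := div_le_div_of_nonneg_left ((mul_nonneg (by linarith) ha).trans hab) hq hqp

theorem sparsifier_preserves_lambda2_general (n : ℕ)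
    (AG AH : Matrix (Fin n) (Fin n) ℝ)
    (hloopG : ∀ i, AG i i = 0)
    (hloopH : ∀ i, AH i i = 0)
    (hdposG : ∀ i, 0 < ∑ j, AG i j) (hdposH : ∀ i, 0 < ∑ j, AH i j)
    (LG LH : Matrix (Fin n) (Fin n) ℝ)
    (hLG : LG = Matrix.diagonal (fun i => ∑ j, AG i j) - AG)
    (hLH : LH = Matrix.diagonal (fun i => ∑ j, AH i j) - AH)
    (ε : ℝ) (hε : 0 < ε) (hε3 : ε < 1 / 3)
    (hlower : (LH - (1 - ε) • LG).PosSemidef)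
    (hupper : ((1 + ε) • LG - LH).PosSemidef) :
    lambda2 (Matrix.diagonal (fun i => (Real.sqrt (∑ j, AH i j))⁻¹) * LH
        * Matrix.diagonal (fun i => (Real.sqrt (∑ j, AH i j))⁻¹))
      ≥ (1 - 3 * ε) *
        lambda2 (Matrix.diagonal (fun i => (Real.sqrt (∑ j, AG i j))⁻¹) * LG
        * Matrix.diagonal (fun i => (Real.sqrt (∑ j, AG i j))⁻¹)) := by
  have hdeg : (fun i => ∑ j, AH i j) ≤ (1 + ε) • fun i => ∑ j, AG i j := fun i => by
    simpa [hLG, hLH, hloopG, hloopH] using hupper.diag_nonneg (i := i)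
  refine mul_lambda2_le_lambda2 (by linarith)
    (diagonalScaling _ fun i => (Real.sqrt_pos.2 (hdposG i)).ne')
    (diagonalScaling _ fun i => (Real.sqrt_pos.2 (hdposH i)).ne') fun y hy => ?_
  rw [diagonalScaling_apply, diagonalScaling_apply, rayleigh_diagonal_inv_sqrt_mul_mul hdposG,
    rayleigh_diagonal_inv_sqrt_mul_mul hdposH]
  have hlower_y := dotProduct_mulVec_le_of_posSemidef_sub hlower y
  have hupper_y := dotProduct_mulVec_le_of_posSemidef_sub hupper y
  have hdeg_y := dotProduct_diagonal_mulVec_mono hdeg y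
  simp only [smul_mulVec, dotProduct_smul, smul_eq_mul, diagonal_smul] at hlower_y hupper_y hdeg_y
  -- the two sparsifier bounds together force `L_G ⪰ 0`
  have hG_nonneg : 0 ≤ y ⬝ᵥ LG *ᵥ y := by nlinarith
  exact one_sub_three_mul_div_le_div hε.le (by linarith) hG_nonneg hlower_y
    (dotProduct_diagonal_mulVec_pos hdposH hy) hdeg_y

/-- if `H` is a spectral ε-sparsifier of `G`, i.e.
`(1-ε) L_G ⪯ L_H ⪯ (1+ε) L_G` with `0 < ε < 1/3`, then
`λ₂(D_H^{-1/2} L_H D_H^{-1/2}) ≥ (1 - 3ε) λ₂(D_G^{-1/2} L_G D_G^{-1/2})`. -/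
theorem sparsifier_preserves_lambda2 (n : ℕ)
    (AG AH : Matrix (Fin n) (Fin n) ℝ)
    (hsymG : AG.IsSymm) (hnonnegG : ∀ i j, 0 ≤ AG i j) (hloopG : ∀ i, AG i i = 0)
    (hsymH : AH.IsSymm) (hnonnegH : ∀ i j, 0 ≤ AH i j) (hloopH : ∀ i, AH i i = 0)
    (hdposG : ∀ i, 0 < ∑ j, AG i j) (hdposH : ∀ i, 0 < ∑ j, AH i j)
    (LG LH : Matrix (Fin n) (Fin n) ℝ)
    (hLG : LG = Matrix.diagonal (fun i => ∑ j, AG i j) - AG)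
    (hLH : LH = Matrix.diagonal (fun i => ∑ j, AH i j) - AH)
    (hconnG : ∀ x : Fin n → ℝ, LG.mulVec x = 0 → ∃ c : ℝ, ∀ i, x i = c)
    (hconnH : ∀ x : Fin n → ℝ, LH.mulVec x = 0 → ∃ c : ℝ, ∀ i, x i = c)
    (ε : ℝ) (hε : 0 < ε) (hε3 : ε < 1 / 3)
    (hlower : (LH - (1 - ε) • LG).PosSemidef)
    (hupper : ((1 + ε) • LG - LH).PosSemidef) :
    lambda2 (Matrix.diagonal (fun i => (Real.sqrt (∑ j, AH i j))⁻¹) * LH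
        * Matrix.diagonal (fun i => (Real.sqrt (∑ j, AH i j))⁻¹))
      ≥ (1 - 3 * ε) *
        lambda2 (Matrix.diagonal (fun i => (Real.sqrt (∑ j, AG i j))⁻¹) * LG
        * Matrix.diagonal (fun i => (Real.sqrt (∑ j, AG i j))⁻¹)) :=
  sparsifier_preserves_lambda2_general n AG AH hloopG hloopH hdposG hdposH LG LH hLG hLH ε hε hε3
    hlower hupper
end
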